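/- arXiv:0904.1939 — 9 statements merged into one kernel-verified Lean document; each statement's English description precedes it below -/
import Mathlib

section
/- Let A and B be unital commutative Banach algebras and T : A⁻¹ → B⁻¹ a surjective map satisfying r(TfTg − 1) = r(fg − 1) for all f, g ∈ A⁻¹, where r denotes the spectral radius. If B is semisimple, then T(f⁻¹) = (Tf)⁻¹ for every f ∈ A⁻¹. -/
theorem stmt1_general {A B : Type*} [NormedCommRing A] [NormedAlgebra ℂ A]
    [NormedCommRing B] [NormedAlgebra ℂ B]
    (T : Aˣ → Bˣ)
    (h : ∀ f g : Aˣ, spectralRadius ℂ ((T f : B) * (T g : B) - 1)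
        = spectralRadius ℂ ((f : A) * (g : A) - 1))
    (hB : ∀ b : B, spectralRadius ℂ b = 0 → b = 0) :
    ∀ f : Aˣ, T f⁻¹ = (T f)⁻¹ := by
  intro f
  have hrad : spectralRadius ℂ ((T f⁻¹ : B) * T f - 1) = 0 := by
    rw [h, Units.inv_mul, sub_self, spectrum.spectralRadius_zero]
  exact eq_inv_of_mul_eq_one_left (Units.ext (sub_eq_zero.mp (hB _ hrad)))

theorem stmt1 {A B : Type*} [NormedCommRing A] [NormedAlgebra ℂ A] [CompleteSpace A]
    [NormedCommRing B] [NormedAlgebra ℂ B] [CompleteSpace B]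
    (T : Aˣ → Bˣ) (hsurj : Function.Surjective T)
    (h : ∀ f g : Aˣ, spectralRadius ℂ ((T f : B) * (T g : B) - 1)
        = spectralRadius ℂ ((f : A) * (g : A) - 1))
    (hB : ∀ b : B, spectralRadius ℂ b = 0 → b = 0) :
    ∀ f : Aˣ, T f⁻¹ = (T f)⁻¹ :=
  stmt1_general T h hB
end

section
/- Let X = [0,1]. The map T : C(X)⁻¹ → C(X)⁻¹ defined by T(f) = f²/|f| is a surjective, non-injective group homomorphism with ‖Tf‖∞ = ‖f‖∞ for all f ∈ C(X)⁻¹; in particular, a multiplicative, norm-preserving map T : C(X)⁻¹ → C(Y)⁻¹ need not have the identity structure. -/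
open Complex Set

/-- Continuous logarithm for a nonvanishing continuous function, on `[0,1]`. -/
lemma exists_cont_log (G : ℝ → ℂ) (hG : Continuous G) (hne : ∀ t, G t ≠ 0) :
    ∃ L : ℝ → ℂ, Continuous L ∧ ∀ t ∈ Icc (0:ℝ) 1, Complex.exp (L t) = G t := by
  classical
  -- minimum modulus on [0,1]
  obtain ⟨x₀, hx₀, hmin⟩ := isCompact_Icc.exists_isMinOn (f := fun t => ‖G t‖)
    (Set.nonempty_Icc.2 zero_le_one) ((continuous_norm.comp hG).continuousOn)
  set m : ℝ := ‖G x₀‖ with hm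
  have hm0 : 0 < m := by
    simpa [hm, norm_pos_iff] using (hne x₀)
  -- uniform continuity on [0,1]
  have huc : UniformContinuousOn G (Icc (0:ℝ) 1) :=
    isCompact_Icc.uniformContinuousOn_of_continuous hG.continuousOn
  obtain ⟨δ, hδ0, hδ⟩ := (Metric.uniformContinuousOn_iff).1 huc m hm0
  -- the set of reachable endpoints
  set S : Set ℝ := {b | b ∈ Icc (0:ℝ) 1 ∧
      ∃ L : ℝ → ℂ, Continuous L ∧ ∀ t ∈ Icc (0:ℝ) b, Complex.exp (L t) = G t} with hS
  have h0S : (0:ℝ) ∈ S := by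
    refine ⟨⟨le_refl 0, zero_le_one⟩, fun _ => Complex.log (G 0), continuous_const, ?_⟩
    intro t ht
    have : t = 0 := le_antisymm ht.2 ht.1
    rw [this, Complex.exp_log (hne 0)]
  have hbdd : BddAbove S := ⟨1, fun b hb => hb.1.2⟩
  have hSne : S.Nonempty := ⟨0, h0S⟩
  set c := sSup S with hc
  have hc0 : 0 ≤ c := le_csSup hbdd h0S
  have hc1 : c ≤ 1 := csSup_le hSne fun b hb => hb.1.2
  -- key extension step
  have ext_step : ∀ b ∈ S, ∀ b', b ≤ b' → b' ≤ 1 → b' - b ≤ δ/2 → b' ∈ S := by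
    rintro b ⟨hbI, L, hL, hLe⟩ b' hbb' hb'1 hdiff
    have hb'I : b' ∈ Icc (0:ℝ) 1 := ⟨le_trans hbI.1 hbb', hb'1⟩
    -- clamp
    set u : ℝ → ℝ := fun t => max b (min t b') with hu
    have hu_cont : Continuous u := continuous_const.max (continuous_id.min continuous_const)
    have hu_mem : ∀ t, u t ∈ Icc b b' := fun t =>
      ⟨le_max_left _ _, max_le (by linarith [hbI.1, hb'1]) (min_le_right _ _)⟩
    have hratio : ∀ t, G (u t) / G b ∈ Complex.slitPlane := by
      intro t
      have h1 : u t ∈ Icc (0:ℝ) 1 := ⟨le_trans hbI.1 (hu_mem t).1, le_trans (hu_mem t).2 hb'1⟩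
      have hdist : dist (u t) b < δ := by
        rw [Real.dist_eq, _root_.abs_of_nonneg (by linarith [(hu_mem t).1])]
        have := (hu_mem t).2
        linarith
      have hGd : dist (G (u t)) (G b) < m := hδ _ h1 _ hbI hdist
      have hmb : m ≤ ‖G b‖ := hmin hbI
      have habs : ‖G (u t) - G b‖ < ‖G b‖ := by
        rw [← Complex.dist_eq]; linarith
      -- Re (G u / G b) > 0
      refine Or.inl ?_
      have hGb : G b ≠ 0 := hne b
      have h2 : ‖G (u t) / G b - 1‖ < 1 := by
        rw [div_sub_one hGb, norm_div]
        rw [div_lt_one (by simpa [norm_pos_iff] using hGb)]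
        exact habs
      have h3 := Complex.abs_re_le_norm (G (u t) / G b - 1)
      have h4 : |(G (u t) / G b).re - 1| < 1 := by
        simpa [Complex.sub_re] using lt_of_le_of_lt h3 h2
      have := abs_lt.1 h4
      linarith [this.1]
    set L' : ℝ → ℂ := fun t =>
      if t ≤ b then L t else L b + Complex.log (G (u t) / G b) with hL'
    have hub : u b = b := by
      simp [hu, min_eq_left hbb']
    have hL'c : Continuous L' := by
      apply Continuous.if_le hL ?_ continuous_id continuous_const
      · intro t ht
        simp only [id_eq] at ht
        rw [ht, hub, div_self (hne b), Complex.log_one, add_zero]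
      · apply continuous_const.add
        rw [continuous_iff_continuousAt]
        intro t
        exact ContinuousAt.clog (((hG.comp hu_cont).continuousAt).div
          continuousAt_const (hne b)) (hratio t)
    refine ⟨hb'I, L', hL'c, ?_⟩
    intro t ht
    by_cases htb : t ≤ b
    · simp only [hL', if_pos htb]
      exact hLe t ⟨ht.1, htb⟩
    · push_neg at htb
      have hut : u t = t := by
        rw [hu]
        simp only
        rw [min_eq_left ht.2, max_eq_right htb.le]
      simp only [hL', if_neg (not_le.2 htb)]
      rw [Complex.exp_add, hLe b ⟨hbI.1, le_refl b⟩, hut,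
        Complex.exp_log (div_ne_zero (hne t) (hne b)), mul_div_cancel₀ _ (hne b)]
  -- conclude 1 ∈ S
  have h1S : (1:ℝ) ∈ S := by
    obtain ⟨b, hbS, hb⟩ := exists_lt_of_lt_csSup hSne (show c - δ/2 < c by linarith)
    by_cases hcase : b + δ/2 ≤ 1
    · exfalso
      have : b + δ/2 ∈ S := ext_step b hbS _ (by linarith) hcase (by linarith)
      have := le_csSup hbdd this
      linarith
    · push_neg at hcase
      exact ext_step b hbS 1 hbS.1.2 le_rfl (by linarith [hbS.1.2])
  obtain ⟨-, L, hLc, hLe⟩ := h1S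
  exact ⟨L, hLc, hLe⟩

/-- Continuous square root of a nonvanishing continuous function on the unit interval. -/
lemma exists_cont_sqrt (g : C(unitInterval, ℂ)) (hg : ∀ x, g x ≠ 0) :
    ∃ f : C(unitInterval, ℂ), (∀ x, f x ≠ 0) ∧ ∀ x, f x ^ 2 = g x := by
  set G : ℝ → ℂ := fun t => g (Set.projIcc 0 1 zero_le_one t) with hGdef
  have hGc : Continuous G := g.continuous.comp continuous_projIcc
  have hGne : ∀ t, G t ≠ 0 := fun t => hg _
  obtain ⟨L, hLc, hLe⟩ := exists_cont_log G hGc hGne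
  refine ⟨⟨fun x => Complex.exp (L x / 2), ?_⟩, ?_, ?_⟩
  · exact Complex.continuous_exp.comp ((hLc.comp continuous_subtype_val).div_const 2)
  · intro x
    exact Complex.exp_ne_zero _
  · intro x
    have hx : (x : ℝ) ∈ Icc (0:ℝ) 1 := x.2
    have hproj : Set.projIcc 0 1 zero_le_one (x : ℝ) = x := by
      rw [Set.projIcc_of_mem _ hx]
    have := hLe (x : ℝ) hx
    calc Complex.exp (L x / 2) ^ 2 = Complex.exp (L x / 2 + L x / 2) := by
          rw [Complex.exp_add]; ring
      _ = Complex.exp (L x) := by ring_nf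
      _ = G x := this
      _ = g x := by show g (Set.projIcc 0 1 zero_le_one (x : ℝ)) = g x; rw [hproj]

noncomputable abbrev tau (a : ℂ) : ℂ := a ^ 2 / ((‖a‖ : ℝ) : ℂ)

lemma tau_mul (a b : ℂ) : tau (a * b) = tau a * tau b := by
  simp only [tau, norm_mul, mul_pow, Complex.ofReal_mul, div_mul_div_comm]

lemma tau_one : tau 1 = 1 := by simp [tau]

lemma unit_apply_ne_zero (f : C(unitInterval, ℂ)ˣ) (x : unitInterval) :
    (f : C(unitInterval, ℂ)) x ≠ 0 := by
  have h : ((f : C(unitInterval, ℂ)) * ((f⁻¹ : C(unitInterval, ℂ)ˣ) : C(unitInterval, ℂ))) x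
      = (1 : C(unitInterval, ℂ)) x := by
    rw [← Units.val_mul, mul_inv_cancel, Units.val_one]
  simp only [ContinuousMap.mul_apply, ContinuousMap.one_apply] at h
  exact left_ne_zero_of_mul_eq_one h

noncomputable def Tcm (f : C(unitInterval, ℂ)ˣ) : C(unitInterval, ℂ) :=
  ⟨fun x => tau ((f : C(unitInterval, ℂ)) x), by
    apply Continuous.div
    · exact ((f : C(unitInterval, ℂ)).continuous.pow 2)
    · exact Complex.continuous_ofReal.comp
        (continuous_norm.comp (f : C(unitInterval, ℂ)).continuous)
    · intro x
      simp only [ne_eq, Complex.ofReal_eq_zero, norm_eq_zero]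
      exact unit_apply_ne_zero f x⟩

lemma Tcm_apply (f : C(unitInterval, ℂ)ˣ) (x : unitInterval) :
    Tcm f x = tau ((f : C(unitInterval, ℂ)) x) := rfl

lemma Tcm_mul (f g : C(unitInterval, ℂ)ˣ) : Tcm (f * g) = Tcm f * Tcm g := by
  ext x
  simp only [Tcm_apply, ContinuousMap.mul_apply, Units.val_mul, tau_mul]

lemma Tcm_mul_inv (f : C(unitInterval, ℂ)ˣ) : Tcm f * Tcm f⁻¹ = 1 := by
  rw [← Tcm_mul, mul_inv_cancel]
  ext x
  simp only [Tcm_apply, Units.val_one, ContinuousMap.one_apply, tau_one]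

noncomputable def Tfull (f : C(unitInterval, ℂ)ˣ) : C(unitInterval, ℂ)ˣ where
  val := Tcm f
  inv := Tcm f⁻¹
  val_inv := Tcm_mul_inv f
  inv_val := by rw [mul_comm]; exact Tcm_mul_inv f

/-- On X = [0,1], the map T(f) = f²/|f| on the invertible group of C(X) is a surjective,
non-injective group homomorphism preserving the supremum norm. -/
theorem stmt3 :
    ∃ T : C(unitInterval, ℂ)ˣ → C(unitInterval, ℂ)ˣ,
      (∀ f : C(unitInterval, ℂ)ˣ, ∀ x : unitInterval,
        (T f : C(unitInterval, ℂ)) x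
          = ((f : C(unitInterval, ℂ)) x) ^ 2 / ((‖(f : C(unitInterval, ℂ)) x‖ : ℝ) : ℂ)) ∧
      (∀ f g : C(unitInterval, ℂ)ˣ, T (f * g) = T f * T g) ∧
      Function.Surjective T ∧
      ¬ Function.Injective T ∧
      (∀ f : C(unitInterval, ℂ)ˣ, ‖(T f : C(unitInterval, ℂ))‖ = ‖(f : C(unitInterval, ℂ))‖) := by
  refine ⟨Tfull, fun f x => rfl, ?_, ?_, ?_, ?_⟩
  · intro f g
    exact Units.ext (Tcm_mul f g)
  · -- surjectivity
    intro g
    set Gc : C(unitInterval, ℂ) := (g : C(unitInterval, ℂ)) with hGc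
    have hGne : ∀ x, Gc x ≠ 0 := unit_apply_ne_zero g
    -- k = G * |G|
    set k : C(unitInterval, ℂ) :=
      ⟨fun x => Gc x * ((‖Gc x‖ : ℝ) : ℂ), by
        exact Gc.continuous.mul
          (Complex.continuous_ofReal.comp (continuous_norm.comp Gc.continuous))⟩ with hk
    have hkne : ∀ x, k x ≠ 0 := by
      intro x
      apply mul_ne_zero (hGne x)
      simp only [ne_eq, Complex.ofReal_eq_zero, norm_eq_zero]
      exact hGne x
    obtain ⟨f, hfne, hfsq⟩ := exists_cont_sqrt k hkne
    have hfu : IsUnit f := f.isUnit_iff_forall_ne_zero.2 hfne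
    refine ⟨hfu.unit, Units.ext ?_⟩
    ext x
    have hval : (hfu.unit : C(unitInterval, ℂ)) = f := hfu.unit_spec
    have habs : ‖f x‖ = ‖Gc x‖ := by
      have h1 : ‖f x‖ ^ 2 = ‖Gc x‖ ^ 2 := by
        rw [← norm_pow, hfsq x, hk]
        simp only [ContinuousMap.coe_mk, norm_mul, Complex.norm_real, Real.norm_eq_abs,
          _root_.abs_of_nonneg (norm_nonneg _)]
        ring
      rw [← Real.sqrt_sq (norm_nonneg (f x)), h1,
        Real.sqrt_sq (norm_nonneg (Gc x))]
    show Tcm hfu.unit x = Gc x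
    rw [Tcm_apply, hval]
    simp only [tau]
    rw [hfsq x, habs]
    show Gc x * ((‖Gc x‖ : ℝ) : ℂ) / _ = Gc x
    rw [mul_div_assoc, div_self, mul_one]
    simp only [ne_eq, Complex.ofReal_eq_zero, norm_eq_zero]
    exact hGne x
  · -- not injective
    intro hinj
    have h : Tfull (-1) = Tfull 1 := by
      apply Units.ext
      ext x
      show tau (((-1 : C(unitInterval, ℂ)ˣ) : C(unitInterval, ℂ)) x)
          = tau (((1 : C(unitInterval, ℂ)ˣ) : C(unitInterval, ℂ)) x)
      rw [Units.val_neg, Units.val_one]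
      simp only [ContinuousMap.neg_apply, ContinuousMap.one_apply]
      norm_num [tau]
    have := hinj h
    have h2 : ((-1 : C(unitInterval, ℂ)ˣ) : C(unitInterval, ℂ)) ⟨0, by norm_num, by norm_num⟩
        = ((1 : C(unitInterval, ℂ)ˣ) : C(unitInterval, ℂ)) ⟨0, by norm_num, by norm_num⟩ := by
      rw [this]
    simp only [Units.val_neg, Units.val_one, ContinuousMap.neg_apply,
      ContinuousMap.one_apply] at h2
    have : (2 : ℂ) = 0 := by linear_combination -h2
    norm_num at this
  · -- norm preserving
    intro f
    rw [ContinuousMap.norm_eq_iSup_norm, ContinuousMap.norm_eq_iSup_norm]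
    congr 1
    funext x
    show ‖tau ((f : C(unitInterval, ℂ)) x)‖ = _
    have ha : (f : C(unitInterval, ℂ)) x ≠ 0 := unit_apply_ne_zero f x
    simp only [tau, norm_div, norm_pow, Complex.norm_real, Real.norm_eq_abs,
      _root_.abs_of_nonneg (norm_nonneg _)]
    rw [pow_two, mul_div_assoc, div_self (norm_ne_zero_iff.mpr ha), mul_one]
end

section
/- Let 𝒜 and ℬ be uniform algebras on compact Hausdorff spaces X and Y, and T : 𝒜⁻¹ → ℬ⁻¹ a surjective map with ‖TfTg‖∞ = ‖fg‖∞ for all f, g ∈ 𝒜⁻¹. Then ‖Tf‖∞ = ‖f‖∞ for every f ∈ 𝒜⁻¹. -/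
/-- The peripheral spectrum of a continuous function on a compact space. -/
noncomputable def perSpec {X : Type*} [TopologicalSpace X] [CompactSpace X]
    (f : C(X, ℂ)) : Set ℂ :=
  {z | z ∈ Set.range f ∧ ‖z‖ = ‖f‖}

/-- A peak set for a subalgebra of C(X, ℂ). -/
def IsPeakSet {X : Type*} [TopologicalSpace X] [CompactSpace X]
    (A : Subalgebra ℂ C(X, ℂ)) (E : Set X) : Prop :=
  ∃ f ∈ A, perSpec f = {1} ∧ E = f ⁻¹' {1}

/-- The Choquet boundary (set of p-points): points x such that {x} is an
intersection of peak sets. -/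
def ChoquetBdry {X : Type*} [TopologicalSpace X] [CompactSpace X]
    (A : Subalgebra ℂ C(X, ℂ)) : Set X :=
  {x | ∃ P : Set (Set X), (∀ E ∈ P, IsPeakSet A E) ∧ ⋂₀ P = {x}}

/-! Taking `g = f` in the hypothesis gives `‖(Tf)²‖ = ‖f²‖`, and the sup norm, being a
C⋆-norm on a commutative algebra, satisfies `‖a²‖ = ‖a‖²`. -/

theorem CStarRing.norm_mul_self_of_comm {E : Type*} [NormedCommRing E] [StarRing E]
    [CStarRing E] (a : E) : ‖a * a‖ = ‖a‖ * ‖a‖ := by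
  have hsq : ‖a * a‖ * ‖a * a‖ = (‖a‖ * ‖a‖) * (‖a‖ * ‖a‖) := by
    calc ‖a * a‖ * ‖a * a‖ = ‖star (a * a) * (a * a)‖ := CStarRing.norm_star_mul_self.symm
      _ = ‖star (star a * a) * (star a * a)‖ := by
          rw [star_mul, star_mul, star_star]; ring_nf
      _ = ‖star a * a‖ * ‖star a * a‖ := CStarRing.norm_star_mul_self
      _ = (‖a‖ * ‖a‖) * (‖a‖ * ‖a‖) := by rw [CStarRing.norm_star_mul_self]
  exact (mul_self_inj (norm_nonneg _) (by positivity)).mp hsq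

theorem stmt6_general {X Y : Type*} [TopologicalSpace X] [CompactSpace X]
    [TopologicalSpace Y] [CompactSpace Y]
    (A : Subalgebra ℂ C(X, ℂ)) (B : Subalgebra ℂ C(Y, ℂ))
    (T : (↥A)ˣ → (↥B)ˣ)
    (h : ∀ f g : (↥A)ˣ, ‖(((T f * T g : (↥B)ˣ) : ↥B) : C(Y, ℂ))‖
        = ‖(((f * g : (↥A)ˣ) : ↥A) : C(X, ℂ))‖) :
    ∀ f : (↥A)ˣ, ‖(((T f : ↥B)) : C(Y, ℂ))‖ = ‖(((f : ↥A)) : C(X, ℂ))‖ := by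
  intro f
  have hsq := h f f
  simp only [Units.val_mul, Subalgebra.coe_mul, CStarRing.norm_mul_self_of_comm] at hsq
  exact (mul_self_inj (norm_nonneg _) (norm_nonneg _)).mp hsq

theorem stmt6 {X Y : Type*} [TopologicalSpace X] [CompactSpace X]
    [TopologicalSpace Y] [CompactSpace Y]
    (A : Subalgebra ℂ C(X, ℂ)) (B : Subalgebra ℂ C(Y, ℂ))
    (hA : IsClosed (A : Set C(X, ℂ))) (hB : IsClosed (B : Set C(Y, ℂ)))
    (hAsep : ∀ x x' : X, x ≠ x' → ∃ f ∈ A, f x ≠ f x')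
    (hBsep : ∀ y y' : Y, y ≠ y' → ∃ g ∈ B, g y ≠ g y')
    (T : (↥A)ˣ → (↥B)ˣ) (hsurj : Function.Surjective T)
    (h : ∀ f g : (↥A)ˣ, ‖(((T f * T g : (↥B)ˣ) : ↥B) : C(Y, ℂ))‖
        = ‖(((f * g : (↥A)ˣ) : ↥A) : C(X, ℂ))‖) :
    ∀ f : (↥A)ˣ, ‖(((T f : ↥B)) : C(Y, ℂ))‖ = ‖(((f : ↥A)) : C(X, ℂ))‖ :=
  stmt6_general A B T h
end

section
/- Let 𝒜 be a uniform algebra on a compact Hausdorff space X, f ∈ 𝒜, and x₀ a point of the Choquet boundary of 𝒜 with f(x₀) ≠ 0. Then there exists u ∈ 𝒜, invertible in 𝒜, with σ_π(u) = {1}, u(x₀) = 1, and σ_π(fu) = {f(x₀)}. -/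
/-!
A point `x₀` of the Choquet boundary has peaking functions that are `≤ ε` in modulus off any
neighbourhood of `x₀`: multiply finitely many peak functions whose peak sets avoid the compact
complement, then raise to a power. Summing such functions `gₙ` for the neighbourhoods
`‖f - f x₀‖ < B / 2ⁿ` with weights `2⁻⁽ⁿ⁺¹⁾` gives `w ∈ 𝒜` with `w x₀ = 1`, `‖w‖ ≤ 1` and
`1 - Re w ≥ c ‖f - f x₀‖`. Then `u = exp (K (w - 1))` is invertible in `𝒜` (closed, so stable
under `exp`), peaks at `x₀`, and `|u| ≤ exp (-‖f - f x₀‖ / |f x₀|)`; since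
`(R + d) e^{-d/R} < R` for `d > 0`, `|f u|` attains `|f x₀|` only where `f = f x₀` and `u = 1`.
-/

lemma ContinuousMap.exp_apply {X : Type*} [TopologicalSpace X] [CompactSpace X] (a : C(X, ℂ))
    (x : X) : NormedSpace.exp a x = Complex.exp (a x) := by
  rw [Complex.exp_eq_exp_ℂ]
  exact NormedSpace.map_exp (ContinuousMap.evalAlgHom ℂ ℂ x) (continuous_eval_const x) a

lemma Complex.eq_one_of_norm_le_one_of_re_eq_one {z : ℂ} (hz : ‖z‖ ≤ 1) (hre : z.re = 1) :
    z = 1 := by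
  have him : z.im = 0 :=
    Complex.abs_re_eq_norm.1 (le_antisymm (abs_re_le_norm z) (by simpa [hre] using hz))
  exact Complex.ext hre him

lemma add_mul_exp_neg_div_lt {R d : ℝ} (hR : 0 < R) (hd : 0 < d) :
    (R + d) * Real.exp (-(d / R)) < R := by
  have h := Real.add_one_lt_exp (div_pos hd hR).ne'
  rw [Real.exp_neg, ← div_eq_mul_inv, div_lt_iff₀ (Real.exp_pos _)]
  calc R + d = R * (d / R + 1) := by field_simp; ring
    _ < R * Real.exp (d / R) := mul_lt_mul_of_pos_left h hR

section PeripheralSpectrum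

variable {X : Type*} [TopologicalSpace X] [CompactSpace X]

lemma perSpec_eq_singleton {φ : C(X, ℂ)} {c : ℂ} {x₀ : X} (h₀ : φ x₀ = c)
    (hle : ∀ x, ‖φ x‖ ≤ ‖c‖) (heq : ∀ x, ‖φ x‖ = ‖c‖ → φ x = c) : perSpec φ = {c} := by
  have hnorm : ‖φ‖ = ‖c‖ :=
    le_antisymm ((φ.norm_le (norm_nonneg c)).2 hle) (h₀ ▸ φ.norm_coe_le_norm x₀)
  ext z
  simp only [perSpec, Set.mem_ofPred_eq, Set.mem_singleton_iff, hnorm]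
  constructor
  · rintro ⟨⟨x, rfl⟩, hx⟩
    exact heq x hx
  · rintro rfl
    exact ⟨⟨x₀, h₀⟩, rfl⟩

lemma norm_eq_one_of_perSpec_eq_one {φ : C(X, ℂ)} (h : perSpec φ = {1}) : ‖φ‖ = 1 := by
  have h1 : (1 : ℂ) ∈ perSpec φ := h ▸ rfl
  simpa using h1.2.symm

lemma norm_apply_lt_one_of_perSpec_eq_one {φ : C(X, ℂ)} (h : perSpec φ = {1}) {x : X}
    (hx : φ x ≠ 1) : ‖φ x‖ < 1 := by
  refine lt_of_le_of_ne ((φ.norm_coe_le_norm x).trans_eq (norm_eq_one_of_perSpec_eq_one h))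
    fun h1 => hx ?_
  have : φ x ∈ perSpec φ := ⟨⟨x, rfl⟩, by rw [h1, norm_eq_one_of_perSpec_eq_one h]⟩
  rwa [h] at this

end PeripheralSpectrum

section DyadicSum

variable {X : Type*} [TopologicalSpace X] [CompactSpace X]

noncomputable def dyadicSum (g : ℕ → C(X, ℂ)) : C(X, ℂ) :=
  ∑' n, ((1 / 2 / 2 ^ n : ℝ) : ℂ) • g n

variable {g : ℕ → C(X, ℂ)}

lemma norm_dyadic_smul_le (hg : ∀ n, ‖g n‖ ≤ 1) (n : ℕ) :
    ‖((1 / 2 / 2 ^ n : ℝ) : ℂ) • g n‖ ≤ 1 / 2 / 2 ^ n := by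
  rw [norm_smul, Complex.norm_real, Real.norm_of_nonneg (by positivity)]
  exact mul_le_of_le_one_right (by positivity) (hg n)

lemma hasSum_dyadicSum (hg : ∀ n, ‖g n‖ ≤ 1) :
    HasSum (fun n => ((1 / 2 / 2 ^ n : ℝ) : ℂ) • g n) (dyadicSum g) :=
  (Summable.of_norm_bounded (hasSum_geometric_two' 1).summable
    (norm_dyadic_smul_le hg)).hasSum

lemma norm_dyadicSum_le (hg : ∀ n, ‖g n‖ ≤ 1) : ‖dyadicSum g‖ ≤ 1 :=
  (hasSum_dyadicSum hg).norm_le_of_bounded (hasSum_geometric_two' 1) (norm_dyadic_smul_le hg)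

lemma hasSum_one_sub_re_dyadicSum (hg : ∀ n, ‖g n‖ ≤ 1) (x : X) :
    HasSum (fun n => 1 / 2 / 2 ^ n * (1 - (g n x).re)) (1 - (dyadicSum g x).re) := by
  have h := Complex.hasSum_re ((ContinuousMap.evalCLM ℂ x).hasSum (hasSum_dyadicSum hg))
  simp only [ContinuousMap.evalCLM_apply, ContinuousMap.smul_apply, smul_eq_mul,
    Complex.re_ofReal_mul] at h
  simpa only [mul_sub, mul_one] using (hasSum_geometric_two' 1).sub h

end DyadicSum

section ChoquetBoundary

variable {X : Type*} [TopologicalSpace X] [CompactSpace X] {A : Subalgebra ℂ C(X, ℂ)} {x₀ : X}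
  {U : Set X}

lemma exists_norm_lt_one_on_compl (hx₀ : x₀ ∈ ChoquetBdry A) (hU : IsOpen U) (hx₀U : x₀ ∈ U) :
    ∃ h ∈ A, h x₀ = 1 ∧ (∀ x, ‖h x‖ ≤ 1) ∧ ∀ x ∉ U, ‖h x‖ < 1 := by
  obtain ⟨P, hP, hPx₀⟩ := hx₀
  choose φ hφA hφ hφE using hP
  have hφle : ∀ E (hE : E ∈ P) x, ‖φ E hE x‖ ≤ 1 := fun E hE x =>
    ((φ E hE).norm_coe_le_norm x).trans_eq (norm_eq_one_of_perSpec_eq_one (hφ E hE))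
  have hclosed : ∀ E : P, IsClosed (E : Set X) := fun E => by
    rw [hφE E E.2]
    exact isClosed_singleton.preimage (φ E E.2).continuous
  have hdisj : Uᶜ ∩ ⋂ E : P, (E : Set X) = ∅ := by
    rw [← Set.sInter_eq_iInter, hPx₀, Set.inter_singleton_eq_empty]
    exact not_not_intro hx₀U
  obtain ⟨t, ht⟩ := hU.isClosed_compl.isCompact.elim_finite_subfamily_closed _ hclosed hdisj
  have happly : ∀ x, (∏ E ∈ t, φ E E.2) x = ∏ E ∈ t, φ E E.2 x :=
    ContinuousMap.prod_apply t _
  refine ⟨∏ E ∈ t, φ E E.2, prod_mem fun E _ => hφA E E.2, ?_, fun x => ?_, fun x hx => ?_⟩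
  · rw [happly]
    refine Finset.prod_eq_one fun E _ => ?_
    have hx₀E : x₀ ∈ ⋂₀ P := hPx₀ ▸ rfl
    have := hx₀E E E.2
    rwa [hφE E E.2] at this
  · rw [happly, norm_prod]
    exact Finset.prod_le_one (fun _ _ => norm_nonneg _) fun E _ => hφle E E.2 x
  · obtain ⟨E, hEt, hxE⟩ : ∃ E ∈ t, x ∉ (E : Set X) := by
      by_contra! h
      exact (Set.eq_empty_iff_forall_notMem.1 ht) x ⟨hx, Set.mem_iInter₂.2 h⟩
    have hlt : ‖φ E E.2 x‖ < 1 :=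
      norm_apply_lt_one_of_perSpec_eq_one (hφ E E.2) fun h => hxE (hφE E E.2 ▸ h)
    rw [happly, norm_prod, ← Finset.mul_prod_erase _ _ hEt]
    refine (mul_le_of_le_one_right (norm_nonneg _) ?_).trans_lt hlt
    exact Finset.prod_le_one (fun _ _ => norm_nonneg _) fun F _ => hφle F F.2 x

lemma exists_norm_le_on_compl (hx₀ : x₀ ∈ ChoquetBdry A) (hU : IsOpen U) (hx₀U : x₀ ∈ U)
    {ε : ℝ} (hε : 0 < ε) : ∃ g ∈ A, g x₀ = 1 ∧ ‖g‖ ≤ 1 ∧ ∀ x ∉ U, ‖g x‖ ≤ ε := by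
  obtain ⟨h, hA, hx₀, hle, hlt⟩ := exists_norm_lt_one_on_compl hx₀ hU hx₀U
  obtain ⟨δ, hδ, hhδ⟩ := hU.isClosed_compl.isCompact.exists_forall_le'
    (by fun_prop : Continuous fun x => 1 - ‖h x‖).continuousOn fun x hx => sub_pos.2 (hlt x hx)
  obtain ⟨n, hn⟩ := exists_pow_lt_of_lt_one hε (sub_lt_self 1 hδ)
  refine ⟨h ^ n, pow_mem hA n, by simp [hx₀], (ContinuousMap.norm_le _ zero_le_one).2 fun x => ?_,
    fun x hx => ?_⟩
  · simpa using pow_le_one₀ (norm_nonneg _) (hle x)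
  · rw [ContinuousMap.pow_apply, norm_pow]
    have : ‖h x‖ ≤ 1 - δ := by linarith [hhδ x hx]
    exact (pow_le_pow_left₀ (norm_nonneg _) this n).trans hn.le

lemma exists_mul_le_one_sub_re (hA : IsClosed (A : Set C(X, ℂ))) (hx₀ : x₀ ∈ ChoquetBdry A)
    {h : X → ℝ} (hh : Continuous h) (hhx₀ : h x₀ = 0) :
    ∃ w ∈ A, w x₀ = 1 ∧ ‖w‖ ≤ 1 ∧ ∃ c > 0, ∀ x, c * h x ≤ 1 - (w x).re := by
  obtain ⟨B, hB, hhB⟩ : ∃ B > 0, ∀ x, h x < B := by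
    obtain ⟨C, hC⟩ := isCompact_univ.bddAbove_image hh.continuousOn
    refine ⟨max C 0 + 1, by positivity, fun x => ?_⟩
    linarith [hC ⟨x, trivial, rfl⟩, le_max_left C 0]
  choose g hgA hgx₀ hg1 hgU using fun n : ℕ =>
    exists_norm_le_on_compl hx₀ (isOpen_lt hh continuous_const)
      (by simp [hhx₀, hB] : x₀ ∈ {x | h x < B / 2 ^ n}) (by norm_num : (0 : ℝ) < 1 / 2)
  have hw := hasSum_one_sub_re_dyadicSum hg1
  have hg_re : ∀ n x, 0 ≤ 1 / 2 / 2 ^ n * (1 - (g n x).re) := fun n x =>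
    mul_nonneg (by positivity)
      (sub_nonneg.2 ((Complex.re_le_norm _).trans ((g n).norm_coe_le_norm x |>.trans (hg1 n))))
  refine ⟨dyadicSum g, tsum_mem hA fun n => A.smul_mem (hgA n) _, ?_, norm_dyadicSum_le hg1,
    (8 * B)⁻¹, by positivity, fun x => ?_⟩
  · refine Complex.eq_one_of_norm_le_one_of_re_eq_one
      (((dyadicSum g).norm_coe_le_norm x₀).trans (norm_dyadicSum_le hg1)) ?_
    have h0 : HasSum (fun n => 1 / 2 / 2 ^ n * (1 - (g n x₀).re)) 0 := by
      simp [hgx₀]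
    linarith [(hw x₀).unique h0]
  rcases le_or_gt (h x) 0 with hx | hx
  · exact (mul_nonpos_of_nonneg_of_nonpos (by positivity) hx).trans ((hw x).nonneg (hg_re · x))
  -- `h x` lies in a dyadic range `[B / 2 ^ (n+1), B / 2 ^ n]`, where `g (n+1)` has `re ≤ 1/2`
  obtain ⟨n, hn, hn'⟩ := exists_nat_pow_near (x := B / h x) (y := 2)
    ((one_le_div hx).2 (hhB x).le) one_lt_two
  have hxU : ‖g (n + 1) x‖ ≤ 1 / 2 := hgU (n + 1) x fun hxU => by
    have : h x < B / 2 ^ (n + 1) := hxU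
    rw [div_lt_iff₀ hx] at hn'
    rw [lt_div_iff₀ (by positivity)] at this
    linarith
  calc (8 * B)⁻¹ * h x ≤ 1 / 2 / 2 ^ (n + 1) * (1 / 2) := by
        rw [le_div_iff₀ hx] at hn
        rw [pow_succ]
        field_simp
        nlinarith
    _ ≤ 1 / 2 / 2 ^ (n + 1) * (1 - (g (n + 1) x).re) :=
        mul_le_mul_of_nonneg_left (by linarith [Complex.re_le_norm (g (n + 1) x)]) (by positivity)
    _ ≤ 1 - (dyadicSum g x).re := le_hasSum (hw x) (n + 1) fun m _ => hg_re m x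

lemma exists_invertible_peak_le_exp_neg (hA : IsClosed (A : Set C(X, ℂ)))
    (hx₀ : x₀ ∈ ChoquetBdry A) {h : X → ℝ} (hh : Continuous h) (hhx₀ : h x₀ = 0) :
    ∃ u ∈ A, (∃ v ∈ A, u * v = 1) ∧ u x₀ = 1 ∧ (∀ x, ‖u x‖ = 1 → u x = 1) ∧
      ∀ x, ‖u x‖ ≤ Real.exp (-h x) := by
  obtain ⟨w, hwA, hwx₀, hw1, c, hc, hcw⟩ := exists_mul_le_one_sub_re hA hx₀ hh hhx₀
  set a : C(X, ℂ) := ((c⁻¹ : ℝ) : ℂ) • (w - 1)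
  have ha : a ∈ A := A.smul_mem (A.sub_mem hwA A.one_mem) _
  have hu : ∀ x, NormedSpace.exp a x = Complex.exp (c⁻¹ * (w x - 1)) := fun x => by
    simp [ContinuousMap.exp_apply, a]
  have hnorm : ∀ x, ‖NormedSpace.exp a x‖ = Real.exp (-(c⁻¹ * (1 - (w x).re))) := fun x => by
    rw [hu, Complex.norm_exp, Complex.re_ofReal_mul, Complex.sub_re, Complex.one_re]
    ring_nf
  refine ⟨NormedSpace.exp a, NormedSpace.exp_mem hA ha, ⟨NormedSpace.exp (-a),
    NormedSpace.exp_mem hA (neg_mem ha), ?_⟩, ?_, fun x hx => ?_, fun x => ?_⟩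
  · rw [← NormedSpace.exp_add_of_commute (Commute.all a (-a)), add_neg_cancel,
      NormedSpace.exp_zero]
  · simp [hu, hwx₀]
  · rw [hnorm, Real.exp_eq_one_iff, neg_eq_zero, mul_eq_zero, sub_eq_zero] at hx
    have hwx : w x = 1 := Complex.eq_one_of_norm_le_one_of_re_eq_one
      ((w.norm_coe_le_norm x).trans hw1) (hx.resolve_left (inv_ne_zero hc.ne')).symm
    simp [hu, hwx]
  · rw [hnorm]
    exact Real.exp_le_exp.2 (neg_le_neg ((le_inv_mul_iff₀ hc).2 (hcw x)))

end ChoquetBoundary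

theorem stmt8_general {X : Type*} [TopologicalSpace X] [CompactSpace X]
    (A : Subalgebra ℂ C(X, ℂ))
    (hA : IsClosed (A : Set C(X, ℂ)))
    (f : C(X, ℂ)) (x₀ : X) (hx₀ : x₀ ∈ ChoquetBdry A)
    (hfx₀ : f x₀ ≠ 0) :
    ∃ u : C(X, ℂ), u ∈ A ∧ (∃ v ∈ A, u * v = 1) ∧
      perSpec u = {1} ∧ u x₀ = 1 ∧ perSpec (f * u) = {f x₀} := by
  set R := ‖f x₀‖
  have hR : 0 < R := norm_pos_iff.2 hfx₀
  obtain ⟨u, huA, hinv, hux₀, hu1, hu⟩ := exists_invertible_peak_le_exp_neg hA hx₀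
    (h := fun x => ‖f x - f x₀‖ / R) (by fun_prop) (by simp)
  have hule : ∀ x, ‖u x‖ ≤ 1 := fun x =>
    (hu x).trans (Real.exp_le_one_iff.2 (neg_nonpos.2 (by positivity)))
  have hfu : ∀ x, f x = f x₀ ∨ ‖f x * u x‖ < R := fun x => by
    refine or_iff_not_imp_left.2 fun hfx => ?_
    have hd : 0 < ‖f x - f x₀‖ := norm_pos_iff.2 (sub_ne_zero.2 hfx)
    calc ‖f x * u x‖ = ‖f x‖ * ‖u x‖ := norm_mul _ _
      _ ≤ (R + ‖f x - f x₀‖) * Real.exp (-(‖f x - f x₀‖ / R)) :=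
          mul_le_mul (norm_le_norm_add_norm_sub' _ _) (hu x) (norm_nonneg _) (by positivity)
      _ < R := add_mul_exp_neg_div_lt hR hd
  refine ⟨u, huA, hinv, perSpec_eq_singleton hux₀ (by simpa using hule)
    (fun x hx => hu1 x (by simpa using hx)), hux₀,
    perSpec_eq_singleton (x₀ := x₀) (by simp [hux₀]) (fun x => ?_) (fun x hx => ?_)⟩
  · rcases hfu x with hfx | hlt
    · simpa [hfx, R] using mul_le_of_le_one_right (norm_nonneg (f x₀)) (hule x)
    · exact hlt.le
  · rcases hfu x with hfx | hlt
    · have hux : ‖u x‖ = 1 := by simpa [hfx, R, hR.ne'] using hx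
      simp [hfx, hu1 x hux]
    · exact absurd hx hlt.ne

/-- Bishop-type lemma: given f in a uniform algebra and a Choquet boundary point x₀ with
f(x₀) ≠ 0, there is an invertible peaking function u at x₀ with σ_π(fu) = {f(x₀)}. -/
theorem stmt8 {X : Type*} [TopologicalSpace X] [CompactSpace X]
    (A : Subalgebra ℂ C(X, ℂ))
    (hA : IsClosed (A : Set C(X, ℂ)))
    (hAsep : ∀ x x' : X, x ≠ x' → ∃ f ∈ A, f x ≠ f x')
    (f : C(X, ℂ)) (hf : f ∈ A) (x₀ : X) (hx₀ : x₀ ∈ ChoquetBdry A)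
    (hfx₀ : f x₀ ≠ 0) :
    ∃ u : C(X, ℂ), u ∈ A ∧ (∃ v ∈ A, u * v = 1) ∧
      perSpec u = {1} ∧ u x₀ = 1 ∧ perSpec (f * u) = {f x₀} :=
  stmt8_general A hA f x₀ hx₀ hfx₀
end

section
/- Let 𝒜 and ℬ be uniform algebras on compact Hausdorff spaces X and Y, and T : 𝒜⁻¹ → ℬ⁻¹ a surjective map with σ_π(TfTg) ⊆ σ_π(fg) for all f, g ∈ 𝒜⁻¹. Then (T1)² = 1. -/
section PeripheralSpectrum

variable {X Y : Type*} [TopologicalSpace X] [CompactSpace X] [TopologicalSpace Y] [CompactSpace Y]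

lemma perSpec_nonempty [Nonempty X] (f : C(X, ℂ)) : (perSpec f).Nonempty := by
  obtain ⟨x, hx⟩ := (map_continuous f).norm.exists_forall_ge (by simp [Filter.cocompact_eq_bot])
  exact ⟨f x, ⟨x, rfl⟩, le_antisymm (f.norm_coe_le_norm x) ((f.norm_le (norm_nonneg _)).mpr hx)⟩

lemma perSpec_one_subset : perSpec (1 : C(X, ℂ)) ⊆ {1} := by
  rintro _ ⟨⟨x, rfl⟩, -⟩
  rfl

lemma perSpec_one [Nonempty X] : perSpec (1 : C(X, ℂ)) = {1} := by
  obtain ⟨z, hz⟩ := perSpec_nonempty (1 : C(X, ℂ))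
  have hz1 : z = 1 := perSpec_one_subset hz
  exact perSpec_one_subset.antisymm (Set.singleton_subset_iff.mpr (hz1 ▸ hz))

lemma norm_eq_of_perSpec_subset [Nonempty Y] {f : C(Y, ℂ)} {g : C(X, ℂ)}
    (h : perSpec f ⊆ perSpec g) : ‖f‖ = ‖g‖ := by
  obtain ⟨z, hz⟩ := perSpec_nonempty f
  exact hz.2.symm.trans (h hz).2

lemma mem_perSpec_of_norm_eq {f : C(X, ℂ)} {x : X} (hx : ‖f x‖ = ‖f‖) : f x ∈ perSpec f :=
  ⟨⟨x, rfl⟩, hx⟩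

lemma eq_one_of_perSpec_subset_one {f f' : C(X, ℂ)} (hff' : f * f' = 1)
    (hf : perSpec f ⊆ {1}) (hf' : ‖f'‖ ≤ 1) : f = 1 := by
  ext x
  have : Nonempty X := ⟨x⟩
  have hf_norm : ‖f‖ = 1 :=
    (norm_eq_of_perSpec_subset (perSpec_one (X := X) ▸ hf)).trans norm_one
  have hprod : ‖f x‖ * ‖f' x‖ = 1 := by
    rw [← norm_mul, ← ContinuousMap.mul_apply, hff', ContinuousMap.one_apply, norm_one]
  have hfx : ‖f x‖ ≤ 1 := hf_norm ▸ f.norm_coe_le_norm x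
  have hf'x : ‖f' x‖ ≤ 1 := (f'.norm_coe_le_norm x).trans hf'
  have hfx_eq : ‖f x‖ = ‖f‖ := by
    rw [hf_norm]
    nlinarith [norm_nonneg (f x), norm_nonneg (f' x)]
  exact hf (mem_perSpec_of_norm_eq hfx_eq)

end PeripheralSpectrum

theorem stmt9_general {X Y : Type*} [TopologicalSpace X] [CompactSpace X]
    [TopologicalSpace Y] [CompactSpace Y]
    (A : Subalgebra ℂ C(X, ℂ)) (B : Subalgebra ℂ C(Y, ℂ))
    (T : (↥A)ˣ → (↥B)ˣ) (hsurj : Function.Surjective T)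
    (h : ∀ f g : (↥A)ˣ, perSpec (((T f * T g : (↥B)ˣ) : ↥B) : C(Y, ℂ))
        ⊆ perSpec (((f * g : (↥A)ˣ) : ↥A) : C(X, ℂ))) :
    (T 1) ^ 2 = 1 := by
  rcases isEmpty_or_nonempty Y with _ | _
  · exact Subsingleton.elim _ _
  obtain ⟨g, hg⟩ := hsurj (T 1)⁻¹
  have hsq : perSpec (((T 1 * T 1 : (↥B)ˣ) : ↥B) : C(Y, ℂ)) ⊆ {1} := by
    have h11 := h 1 1
    rw [mul_one] at h11
    exact h11.trans perSpec_one_subset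
  have hg_norm : ‖((g : ↥A) : C(X, ℂ))‖ = 1 := by
    have h1g := h 1 g
    rw [hg, mul_inv_cancel, one_mul] at h1g
    simpa using (norm_eq_of_perSpec_subset h1g).symm
  have hinv_sq : ‖((((T 1)⁻¹ * (T 1)⁻¹ : (↥B)ˣ) : ↥B) : C(Y, ℂ))‖ ≤ 1 := by
    have hgg := h g g
    rw [hg] at hgg
    rw [norm_eq_of_perSpec_subset hgg]
    push_cast
    exact (norm_mul_le _ _).trans_eq (by rw [hg_norm, one_mul])
  have hprod : ((((T 1 * T 1) * ((T 1)⁻¹ * (T 1)⁻¹) : (↥B)ˣ) : ↥B) : C(Y, ℂ)) = 1 := by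
    rw [mul_mul_mul_comm, mul_inv_cancel, one_mul]
    rfl
  have hsq_one := eq_one_of_perSpec_subset_one (by exact_mod_cast hprod) hsq hinv_sq
  ext1
  exact Subtype.ext (by simpa [sq] using hsq_one)

theorem stmt9 {X Y : Type*} [TopologicalSpace X] [CompactSpace X]
    [TopologicalSpace Y] [CompactSpace Y]
    (A : Subalgebra ℂ C(X, ℂ)) (B : Subalgebra ℂ C(Y, ℂ))
    (hA : IsClosed (A : Set C(X, ℂ))) (hB : IsClosed (B : Set C(Y, ℂ)))
    (hAsep : ∀ x x' : X, x ≠ x' → ∃ f ∈ A, f x ≠ f x')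
    (hBsep : ∀ y y' : Y, y ≠ y' → ∃ g ∈ B, g y ≠ g y')
    (T : (↥A)ˣ → (↥B)ˣ) (hsurj : Function.Surjective T)
    (h : ∀ f g : (↥A)ˣ, perSpec (((T f * T g : (↥B)ˣ) : ↥B) : C(Y, ℂ))
        ⊆ perSpec (((f * g : (↥A)ˣ) : ↥A) : C(X, ℂ))) :
    (T 1) ^ 2 = 1 :=
  stmt9_general A B T hsurj h
end

section
/- Let A be a unital semisimple commutative Banach algebra and B a unital commutative Banach algebra. If T : A⁻¹ → B⁻¹ is a surjective group homomorphism such that σ(Tf) = σ(f) for every f ∈ A⁻¹, then T is injective. -/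
/-! If `T f = T g` then `T (f g⁻¹) = 1`, so `σ(f g⁻¹) = σ(1) ⊆ {1}` and `σ(f g⁻¹ - 1) ⊆ {0}`.
The spectral radius of `f g⁻¹ - 1` therefore vanishes, and semisimplicity forces `f = g`. -/

theorem spectrum_one_subset {𝕜 A : Type*} [Field 𝕜] [Ring A] [Algebra 𝕜 A] :
    spectrum 𝕜 (1 : A) ⊆ {1} := by
  rcases subsingleton_or_nontrivial A with _ | _
  · simp [spectrum.of_subsingleton]
  · exact spectrum.one_eq.subset

section SpectralRadius

variable {𝕜 A : Type*} [NormedField 𝕜] [Ring A] [Algebra 𝕜 A]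

theorem spectralRadius_eq_zero_of_spectrum_subset {a : A} (ha : spectrum 𝕜 a ⊆ {0}) :
    spectralRadius 𝕜 a = 0 :=
  nonpos_iff_eq_zero.mp <| iSup₂_le fun k hk => by simp [show k = 0 from ha hk]

theorem eq_one_of_spectrum_subset (hA : ∀ a : A, spectralRadius 𝕜 a = 0 → a = 0) {a : A}
    (ha : spectrum 𝕜 a ⊆ {1}) : a = 1 := by
  have hsub : spectrum 𝕜 (a - 1) ⊆ {0} := by
    rw [← map_one (algebraMap 𝕜 A), ← spectrum.sub_singleton_eq]
    rintro _ ⟨z, hz, _, rfl, rfl⟩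
    obtain rfl : z = 1 := ha hz
    simp
  exact sub_eq_zero.mp (hA _ (spectralRadius_eq_zero_of_spectrum_subset hsub))

end SpectralRadius

theorem stmt12_general {A B : Type*} [NormedCommRing A] [NormedAlgebra ℂ A]
    [NormedCommRing B] [NormedAlgebra ℂ B]
    (hA : ∀ a : A, spectralRadius ℂ a = 0 → a = 0)
    (T : Aˣ → Bˣ)
    (hmul : ∀ f g : Aˣ, T (f * g) = T f * T g)
    (h : ∀ f : Aˣ, spectrum ℂ ((T f : B)) = spectrum ℂ ((f : A))) :
    Function.Injective T := by
  refine (injective_iff_map_eq_one (MonoidHom.mk' T hmul)).mpr fun u hu => Units.ext ?_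
  have hTu : T u = 1 := hu
  refine eq_one_of_spectrum_subset hA ?_
  rw [← h u, hTu, Units.val_one]
  exact spectrum_one_subset

theorem stmt12 {A B : Type*} [NormedCommRing A] [NormedAlgebra ℂ A] [CompleteSpace A]
    [NormedCommRing B] [NormedAlgebra ℂ B] [CompleteSpace B]
    (hA : ∀ a : A, spectralRadius ℂ a = 0 → a = 0)
    (T : Aˣ → Bˣ) (hsurj : Function.Surjective T)
    (hmul : ∀ f g : Aˣ, T (f * g) = T f * T g)
    (h : ∀ f : Aˣ, spectrum ℂ ((T f : B)) = spectrum ℂ ((f : A))) :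
    Function.Injective T :=
  stmt12_general hA T hmul h
end

section
/- Let 𝒜 and ℬ be uniform algebras on compact Hausdorff spaces X, Y and T : 𝒜⁻¹ → ℬ⁻¹ a surjective map with ‖TfTg − 1‖∞ = ‖fg − 1‖∞ for all f, g ∈ 𝒜⁻¹. Then T is injective and ‖TfTg‖∞ = ‖fg‖∞ for all f, g ∈ 𝒜⁻¹. -/
/-!
Injectivity: `T f * T g = 1` forces `‖f g - 1‖ = 0`, so `T` maps inverses to inverses, and then
`T f = T g` gives `f g⁻¹ = 1`.

For the norms put `s = (n + 1) • 1`. The unit `T (s f) * T f⁻¹ = T (s f) * (T f)⁻¹` lies at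
distance `‖s - 1‖ = n` from `1`, so its norm is at most `n + 1`, and `T (s f) * T g` is that unit
times `T f * T g`. Comparing `‖s f g - 1‖ = ‖T (s f) T g - 1‖` gives
`(n + 1) ‖f g‖ ≤ (n + 1) ‖T f T g‖ + O(1)`, and letting `n → ∞` gives `‖f g‖ ≤ ‖T f T g‖`.
The inverse bijection satisfies the same hypothesis, which yields the reverse inequality.
-/

lemma nonpos_of_forall_natCast_mul_le {d C : ℝ} (h : ∀ n : ℕ, (n : ℝ) * d ≤ C) : d ≤ 0 := by
  by_contra! hd
  obtain ⟨n, hn⟩ := exists_nat_gt (C / d)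
  linarith [h n, (div_lt_iff₀ hd).mp hn]

section Units

variable {R S : Type*} [NormedRing R] [NormedRing S]

def PreservesNormMulSubOne (T : Rˣ → Sˣ) : Prop :=
  ∀ f g : Rˣ, ‖((T f * T g : Sˣ) : S) - 1‖ = ‖((f * g : Rˣ) : R) - 1‖

namespace PreservesNormMulSubOne

variable {T : Rˣ → Sˣ} (hT : PreservesNormMulSubOne T)
include hT

lemma mul_eq_one_of_map_mul_eq_one {f g : Rˣ} (hfg : T f * T g = 1) : f * g = 1 := by
  have h := hT f g
  rw [hfg, Units.val_one, sub_self, norm_zero, eq_comm, norm_sub_eq_zero_iff] at h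
  exact Units.ext h

lemma map_inv (hsurj : Function.Surjective T) (f : Rˣ) : T f⁻¹ = (T f)⁻¹ := by
  obtain ⟨g, hg⟩ := hsurj (T f)⁻¹
  have hfg : f * g = 1 := hT.mul_eq_one_of_map_mul_eq_one (by rw [hg, mul_inv_cancel])
  rw [← eq_inv_of_mul_eq_one_right hfg, hg]

lemma injective (hsurj : Function.Surjective T) : Function.Injective T := fun f g hfg =>
  mul_inv_eq_one.mp <| hT.mul_eq_one_of_map_mul_eq_one <| by
    rw [hT.map_inv hsurj, hfg, mul_inv_cancel]

lemma symm (e : Rˣ ≃ Sˣ) (he : ⇑e = T) : PreservesNormMulSubOne e.symm := fun u v => by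
  have h := hT (e.symm u) (e.symm v)
  rw [← he, e.apply_symm_apply, e.apply_symm_apply] at h
  exact h.symm

lemma natCast_add_one_mul_norm_le (𝕜 : Type*) [RCLike 𝕜] [NormedAlgebra 𝕜 R]
    (hsurj : Function.Surjective T) (f g : Rˣ) (n : ℕ) :
    ((n : ℝ) + 1) * ‖((f * g : Rˣ) : R)‖ - ‖(1 : R)‖
      ≤ (n * ‖(1 : R)‖ + ‖(1 : S)‖) * ‖((T f * T g : Sˣ) : S)‖ + ‖(1 : S)‖ := by
  set s : Rˣ :=
    Units.map (algebraMap 𝕜 R).toMonoidHom (Units.mk0 ((n : 𝕜) + 1) n.cast_add_one_ne_zero)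
  have hs : (s : R) = ((n : 𝕜) + 1) • (1 : R) := Algebra.algebraMap_eq_smul_one _
  set W : Sˣ := T (s * f) * T f⁻¹
  have hW : ‖(W : S)‖ ≤ n * ‖(1 : R)‖ + ‖(1 : S)‖ := by
    have hdist : ‖(W : S) - 1‖ = n * ‖(1 : R)‖ := by
      rw [hT, mul_inv_cancel_right, hs, add_smul, one_smul, add_sub_cancel_right, norm_smul,
        RCLike.norm_natCast]
    linarith [norm_le_norm_sub_add (W : S) 1]
  have hsplit : T (s * f) * T g = W * (T f * T g) := by
    simp only [W, hT.map_inv hsurj, mul_assoc, inv_mul_cancel_left]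
  have hsfg : ((s * f * g : Rˣ) : R) = ((n : 𝕜) + 1) • ((f * g : Rˣ) : R) := by
    rw [mul_assoc, Units.val_mul s, hs, smul_one_mul]
  have hnorm : ‖((s * f * g : Rˣ) : R)‖ = ((n : ℝ) + 1) * ‖((f * g : Rˣ) : R)‖ := by
    rw [hsfg, norm_smul, ← Nat.cast_add_one, RCLike.norm_natCast, Nat.cast_add_one]
  calc ((n : ℝ) + 1) * ‖((f * g : Rˣ) : R)‖ - ‖(1 : R)‖
      ≤ ‖((s * f * g : Rˣ) : R) - 1‖ := hnorm ▸ norm_sub_norm_le _ _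
    _ = ‖((W * (T f * T g) : Sˣ) : S) - 1‖ := by rw [← hT, hsplit]
    _ ≤ ‖(W : S)‖ * ‖((T f * T g : Sˣ) : S)‖ + ‖(1 : S)‖ :=
        (norm_sub_le _ _).trans (by gcongr; exact norm_mul_le _ _)
    _ ≤ (n * ‖(1 : R)‖ + ‖(1 : S)‖) * ‖((T f * T g : Sˣ) : S)‖ + ‖(1 : S)‖ := by gcongr

lemma norm_mul_le (𝕜 : Type*) [RCLike 𝕜] [NormedAlgebra 𝕜 R] (hsurj : Function.Surjective T)
    (f g : Rˣ) :
    ‖((f * g : Rˣ) : R)‖ ≤ ‖(1 : R)‖ * ‖((T f * T g : Sˣ) : S)‖ := by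
  have hscale := hT.natCast_add_one_mul_norm_le 𝕜 hsurj f g
  refine sub_nonpos.mp <| nonpos_of_forall_natCast_mul_le
    (C := ‖(1 : R)‖ + ‖(1 : S)‖ * (‖((T f * T g : Sˣ) : S)‖ + 1)) fun n => ?_
  nlinarith [hscale n, norm_nonneg ((f * g : Rˣ) : R)]

lemma norm_map_mul (𝕜 : Type*) [RCLike 𝕜] [NormedAlgebra 𝕜 R] [NormedAlgebra 𝕜 S]
    (hsurj : Function.Surjective T) (hR : ‖(1 : R)‖ ≤ 1) (hS : ‖(1 : S)‖ ≤ 1)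
    (f g : Rˣ) : ‖((T f * T g : Sˣ) : S)‖ = ‖((f * g : Rˣ) : R)‖ := by
  let e := Equiv.ofBijective T ⟨hT.injective hsurj, hsurj⟩
  have hle := (hT.norm_mul_le 𝕜 hsurj f g).trans
    (mul_le_of_le_one_left (norm_nonneg _) hR)
  have hge := ((hT.symm e rfl).norm_mul_le 𝕜 e.symm.surjective (T f) (T g)).trans
    (mul_le_of_le_one_left (norm_nonneg _) hS)
  rw [show e.symm (T f) = f from e.symm_apply_apply f,
    show e.symm (T g) = g from e.symm_apply_apply g] at hge
  exact le_antisymm hge hle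

end PreservesNormMulSubOne

end Units

lemma ContinuousMap.norm_one_le_one {X : Type*} [TopologicalSpace X] [CompactSpace X] :
    ‖(1 : C(X, ℂ))‖ ≤ 1 :=
  (ContinuousMap.norm_le _ zero_le_one).mpr fun _ => by simp

theorem stmt14_general {X Y : Type*} [TopologicalSpace X] [CompactSpace X]
    [TopologicalSpace Y] [CompactSpace Y]
    (A : Subalgebra ℂ C(X, ℂ)) (B : Subalgebra ℂ C(Y, ℂ))
    (T : (↥A)ˣ → (↥B)ˣ) (hsurj : Function.Surjective T)
    (h : ∀ f g : (↥A)ˣ, ‖(((T f * T g : (↥B)ˣ) : ↥B) : C(Y, ℂ)) - 1‖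
        = ‖(((f * g : (↥A)ˣ) : ↥A) : C(X, ℂ)) - 1‖) :
    Function.Injective T ∧
    ∀ f g : (↥A)ˣ, ‖(((T f * T g : (↥B)ˣ) : ↥B) : C(Y, ℂ))‖
        = ‖(((f * g : (↥A)ˣ) : ↥A) : C(X, ℂ))‖ := by
  have hT : PreservesNormMulSubOne T := h
  exact ⟨hT.injective hsurj, hT.norm_map_mul ℂ hsurj ContinuousMap.norm_one_le_one
    ContinuousMap.norm_one_le_one⟩

theorem stmt14 {X Y : Type*} [TopologicalSpace X] [CompactSpace X]
    [TopologicalSpace Y] [CompactSpace Y]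
    (A : Subalgebra ℂ C(X, ℂ)) (B : Subalgebra ℂ C(Y, ℂ))
    (hA : IsClosed (A : Set C(X, ℂ))) (hB : IsClosed (B : Set C(Y, ℂ)))
    (hAsep : ∀ x x' : X, x ≠ x' → ∃ f ∈ A, f x ≠ f x')
    (hBsep : ∀ y y' : Y, y ≠ y' → ∃ g ∈ B, g y ≠ g y')
    (T : (↥A)ˣ → (↥B)ˣ) (hsurj : Function.Surjective T)
    (h : ∀ f g : (↥A)ˣ, ‖(((T f * T g : (↥B)ˣ) : ↥B) : C(Y, ℂ)) - 1‖
        = ‖(((f * g : (↥A)ˣ) : ↥A) : C(X, ℂ)) - 1‖) :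
    Function.Injective T ∧
    ∀ f g : (↥A)ˣ, ‖(((T f * T g : (↥B)ˣ) : ↥B) : C(Y, ℂ))‖
        = ‖(((f * g : (↥A)ˣ) : ↥A) : C(X, ℂ))‖ :=
  stmt14_general A B T hsurj h
end

section
/- Let 𝒜 and ℬ be uniform algebras and T : 𝒜⁻¹ → ℬ⁻¹ a surjective map satisfying ‖TfTg − 1‖∞ = ‖fg − 1‖∞ for all f, g ∈ 𝒜⁻¹ with T1 = 1. Then T(−1) = −1 and T(−i) = −T(i), and (Ti)² = −1. -/
/-- The constant `i` as a unit of a subalgebra of `C(X, ℂ)`. -/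
noncomputable def iUnit {X : Type*} [TopologicalSpace X] [CompactSpace X]
    (A : Subalgebra ℂ C(X, ℂ)) : (↥A)ˣ :=
  Units.map (algebraMap ℂ ↥A).toMonoidHom (Units.mk0 Complex.I Complex.I_ne_zero)

/-!
With `u = T(-1)` one has `u² = 1`, hence `‖u‖ ≤ 1`. Pulling the unit `2 + u` back to some `g`,
the identities `(2 + u)² - 1 = 4(1 + u)` and `(2 + u)u - 1 = 2u` give
`4‖1 + u‖ = ‖g² - 1‖ ≤ ‖g - 1‖ ‖g + 1‖ ≤ 2‖1 + u‖`, so `u = -1`.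
Then `T(i)` and `T(-i)` are mutually inverse functions whose values lie within `√2` of both `1`
and `-1`. Such values have modulus at most `1` (parallelogram law), hence exactly `1`, and the
only points of the unit circle within `√2` of both `±1` are `±i`.
-/

open Complex

theorem Complex.norm_le_one_of_sq_norm_sub_one_le_two {z : ℂ} (h₁ : ‖z - 1‖ ^ 2 ≤ 2)
    (h₂ : ‖z + 1‖ ^ 2 ≤ 2) : ‖z‖ ≤ 1 := by
  have := parallelogram_law_with_norm ℝ z 1
  rw [norm_one] at this
  nlinarith [norm_nonneg z]

theorem Complex.sq_eq_neg_one_of_mul_eq_one {z w : ℂ} (hzw : z * w = 1)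
    (hz₁ : ‖z - 1‖ ^ 2 ≤ 2) (hz₂ : ‖z + 1‖ ^ 2 ≤ 2)
    (hw₁ : ‖w - 1‖ ^ 2 ≤ 2) (hw₂ : ‖w + 1‖ ^ 2 ≤ 2) : z ^ 2 = -1 := by
  have hz := norm_le_one_of_sq_norm_sub_one_le_two hz₁ hz₂
  have hw := norm_le_one_of_sq_norm_sub_one_le_two hw₁ hw₂
  have hzw' : ‖z‖ * ‖w‖ = 1 := by rw [← norm_mul, hzw, norm_one]
  have hz_one : ‖z‖ ^ 2 = 1 := by nlinarith [norm_nonneg z, norm_nonneg w]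
  simp only [Complex.sq_norm, normSq_apply, sub_re, sub_im, add_re, add_im, one_re, one_im]
    at hz₁ hz₂ hz_one
  have hre : z.re = 0 := by nlinarith
  apply Complex.ext
  · simp only [sq, mul_re, hre, mul_zero, zero_sub, neg_re, one_re, neg_inj]
    nlinarith
  · simp [sq, hre]

theorem ContinuousMap.norm_algebraMap_le {X 𝕜 : Type*} [TopologicalSpace X] [CompactSpace X]
    [NormedField 𝕜] (c : 𝕜) : ‖algebraMap 𝕜 C(X, 𝕜) c‖ ≤ ‖c‖ :=
  (ContinuousMap.norm_le _ (norm_nonneg c)).2 fun x => by simp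

theorem ContinuousMap.norm_le_one_of_mul_self_eq_one {X 𝕜 : Type*} [TopologicalSpace X]
    [CompactSpace X] [NormedDivisionRing 𝕜] {u : C(X, 𝕜)} (hu : u * u = 1) : ‖u‖ ≤ 1 := by
  refine (ContinuousMap.norm_le _ zero_le_one).2 fun x => ?_
  have : ‖u x‖ * ‖u x‖ = 1 := by
    rw [← norm_mul, ← ContinuousMap.mul_apply, hu, ContinuousMap.one_apply, norm_one]
  nlinarith [norm_nonneg (u x)]

theorem ContinuousMap.sq_eq_neg_one_of_mul_eq_one {Y : Type*} [TopologicalSpace Y]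
    [CompactSpace Y] {F G : C(Y, ℂ)} (hFG : F * G = 1)
    (hF₁ : ‖F - 1‖ ^ 2 ≤ 2) (hF₂ : ‖F + 1‖ ^ 2 ≤ 2)
    (hG₁ : ‖G - 1‖ ^ 2 ≤ 2) (hG₂ : ‖G + 1‖ ^ 2 ≤ 2) : F ^ 2 = -1 := by
  have pointwise {H : C(Y, ℂ)} (hH : ‖H‖ ^ 2 ≤ 2) (y : Y) : ‖H y‖ ^ 2 ≤ 2 :=
    (pow_le_pow_left₀ (norm_nonneg _) (H.norm_coe_le_norm y) 2).trans hH
  ext y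
  simpa using Complex.sq_eq_neg_one_of_mul_eq_one (w := G y) (by simpa using congr($hFG y))
    (by simpa using pointwise hF₁ y) (by simpa using pointwise hF₂ y)
    (by simpa using pointwise hG₁ y) (by simpa using pointwise hG₂ y)

theorem isUnit_two_add_of_mul_self_eq_one {S : Type*} [Ring S] [Algebra ℝ S] {u : S}
    (hu : u * u = 1) : IsUnit (2 + u) := by
  have h3 : (2 + u) * (2 - u) = 3 ∧ (2 - u) * (2 + u) = 3 := by
    constructor <;> noncomm_ring <;> rw [hu] <;> norm_num
  have three_eq : (3⁻¹ : ℝ) • (3 : S) = 1 := by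
    rw [← map_ofNat (algebraMap ℝ S) 3, Algebra.smul_def, ← map_mul]; norm_num
  refine ⟨⟨2 + u, (3⁻¹ : ℝ) • (2 - u), ?_, ?_⟩, rfl⟩
  · rw [mul_smul_comm, h3.1, three_eq]
  · rw [smul_mul_assoc, h3.2, three_eq]

def NormMulSubOnePreserving {R S : Type*} [NormedRing R] [NormedRing S] (T : Rˣ → Sˣ) : Prop :=
  ∀ f g : Rˣ, ‖((T f * T g : Sˣ) : S) - 1‖ = ‖((f * g : Rˣ) : R) - 1‖

namespace NormMulSubOnePreserving

variable {R S : Type*} [NormedRing R] [NormedRing S] {T : Rˣ → Sˣ}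
  (hT : NormMulSubOnePreserving T)
include hT

theorem mul_eq_one_iff (f g : Rˣ) : T f * T g = 1 ↔ f * g = 1 := by
  rw [Units.ext_iff, Units.ext_iff, Units.val_one, Units.val_one, ← norm_sub_eq_zero_iff, hT,
    norm_sub_eq_zero_iff]

theorem norm_sub_one (hT1 : T 1 = 1) (f : Rˣ) : ‖(T f : S) - 1‖ = ‖(f : R) - 1‖ := by
  simpa [hT1] using hT f 1

theorem norm_add_one (hT1 : T (-1) = -1) (f : Rˣ) : ‖(T f : S) + 1‖ = ‖(f : R) + 1‖ := by
  have := hT f (-1)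
  simp only [hT1, Units.val_neg, mul_neg, mul_one] at this
  rwa [← neg_add', norm_neg, ← neg_add', norm_neg] at this

theorem map_neg_one_mul_self : T (-1) * T (-1) = 1 :=
  (hT.mul_eq_one_iff (-1) (-1)).2 (by rw [neg_one_mul, neg_neg])

theorem map_neg_one [NormedAlgebra ℝ S] (hsurj : Function.Surjective T) (hT1 : T 1 = 1)
    (hu : ‖(T (-1) : S)‖ ≤ 1) : T (-1) = -1 := by
  set u : S := (T (-1) : S) with hu_def
  have hu2 : u * u = 1 := congr_arg Units.val hT.map_neg_one_mul_self
  obtain ⟨V, hV⟩ := isUnit_two_add_of_mul_self_eq_one hu2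
  obtain ⟨g, rfl⟩ := hsurj V
  have hsub : ‖(g : R) - 1‖ = ‖1 + u‖ := by
    rw [← hT.norm_sub_one hT1, hV]
    congr 1
    rw [← one_add_one_eq_two]
    abel
  have hadd : ‖(g : R) + 1‖ ≤ 2 := by
    calc ‖(g : R) + 1‖ = ‖u + u‖ := by
          have := hT g (-1)
          rw [Units.val_mul, Units.val_mul, hV, ← hu_def, Units.val_neg, Units.val_one,
            mul_neg_one, ← neg_add', norm_neg] at this
          rw [← this, add_mul, hu2, add_sub_cancel_right, two_mul]
      _ ≤ 2 := by linarith [norm_add_le u u]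
  have hsq : 4 * ‖1 + u‖ = ‖(g : R) * g - 1‖ := by
    have h4 : (2 + u) * (2 + u) - 1 = (4 : ℝ) • (1 + u) := by
      rw [ofNat_smul_eq_nsmul (R := ℝ), ← one_add_one_eq_two]
      simp only [add_mul, mul_add, one_mul, mul_one, hu2]
      abel
    rw [← Units.val_mul, ← hT g g, Units.val_mul, hV, h4, norm_smul, Real.norm_ofNat]
  have hzero : ‖1 + u‖ = 0 := by
    have : 4 * ‖1 + u‖ ≤ ‖1 + u‖ * 2 :=
      calc 4 * ‖1 + u‖ = ‖((g : R) - 1) * (g + 1)‖ := by rw [hsq]; congr 1; noncomm_ring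
        _ ≤ ‖(g : R) - 1‖ * ‖(g : R) + 1‖ := norm_mul_le _ _
        _ ≤ ‖1 + u‖ * 2 := by rw [hsub]; gcongr
    linarith [norm_nonneg (1 + u)]
  ext
  exact eq_neg_of_add_eq_zero_right (norm_eq_zero.1 hzero)

end NormMulSubOnePreserving

theorem eq_neg_of_mul_eq_one_of_sq_eq_neg_one {M : Type*} [Monoid M] [HasDistribNeg M]
    {a b : M} (hab : a * b = 1) (ha : a ^ 2 = -1) : b = -a :=
  calc b = -(a ^ 2 * b) := by rw [ha, neg_one_mul, neg_neg]
    _ = -a := by rw [sq, mul_assoc, hab, mul_one]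

section iUnit

variable {X : Type*} [TopologicalSpace X] [CompactSpace X] (A : Subalgebra ℂ C(X, ℂ))

theorem iUnit_mul_neg_self : iUnit A * -iUnit A = 1 := by
  apply Units.ext
  change algebraMap ℂ ↥A I * -algebraMap ℂ ↥A I = 1
  rw [← map_neg, ← map_mul, mul_neg, I_mul_I, neg_neg, map_one]

theorem sq_norm_iUnit_sub_one_le : ‖((iUnit A : ↥A) : C(X, ℂ)) - 1‖ ^ 2 ≤ 2 :=
  calc ‖((iUnit A : ↥A) : C(X, ℂ)) - 1‖ ^ 2 = ‖algebraMap ℂ C(X, ℂ) (I - 1)‖ ^ 2 := by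
        rw [map_sub, map_one]; rfl
    _ ≤ ‖I - 1‖ ^ 2 := by gcongr; exact ContinuousMap.norm_algebraMap_le _
    _ = 2 := by rw [Complex.sq_norm, normSq_apply]; norm_num

theorem sq_norm_iUnit_add_one_le : ‖((iUnit A : ↥A) : C(X, ℂ)) + 1‖ ^ 2 ≤ 2 :=
  calc ‖((iUnit A : ↥A) : C(X, ℂ)) + 1‖ ^ 2 = ‖algebraMap ℂ C(X, ℂ) (I + 1)‖ ^ 2 := by
        rw [map_add, map_one]; rfl
    _ ≤ ‖I + 1‖ ^ 2 := by gcongr; exact ContinuousMap.norm_algebraMap_le _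
    _ = 2 := by rw [Complex.sq_norm, normSq_apply]; norm_num

end iUnit

theorem stmt15_general {X Y : Type*} [TopologicalSpace X] [CompactSpace X]
    [TopologicalSpace Y] [CompactSpace Y]
    (A : Subalgebra ℂ C(X, ℂ)) (B : Subalgebra ℂ C(Y, ℂ))
    (T : (↥A)ˣ → (↥B)ˣ) (hsurj : Function.Surjective T)
    (h : ∀ f g : (↥A)ˣ, ‖(((T f * T g : (↥B)ˣ) : ↥B) : C(Y, ℂ)) - 1‖
        = ‖(((f * g : (↥A)ˣ) : ↥A) : C(X, ℂ)) - 1‖)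
    (hT1 : T 1 = 1) :
    T (-1) = -1 ∧ T (-(iUnit A)) = -(T (iUnit A)) ∧ (T (iUnit A)) ^ 2 = -1 := by
  have hT : NormMulSubOnePreserving T := h
  have hneg : T (-1) = -1 := by
    refine hT.map_neg_one hsurj hT1 (ContinuousMap.norm_le_one_of_mul_self_eq_one ?_)
    exact congr((($(hT.map_neg_one_mul_self) : ↥B) : C(Y, ℂ)))
  have hbound (f : (↥A)ˣ) :
      ‖((T f : ↥B) : C(Y, ℂ)) - 1‖ = ‖((f : ↥A) : C(X, ℂ)) - 1‖ ∧
      ‖((T f : ↥B) : C(Y, ℂ)) + 1‖ = ‖((f : ↥A) : C(X, ℂ)) + 1‖ :=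
    ⟨hT.norm_sub_one hT1 f, hT.norm_add_one hneg f⟩
  set J := iUnit A
  have hJJ : T J * T (-J) = 1 := (hT.mul_eq_one_iff J (-J)).2 (iUnit_mul_neg_self A)
  have hsq : T J ^ 2 = -1 := by
    ext : 2
    refine ContinuousMap.sq_eq_neg_one_of_mul_eq_one (G := ((T (-J) : ↥B) : C(Y, ℂ)))
      congr((($hJJ : ↥B) : C(Y, ℂ))) ?_ ?_ ?_ ?_
    · rw [(hbound J).1]; exact sq_norm_iUnit_sub_one_le A
    · rw [(hbound J).2]; exact sq_norm_iUnit_add_one_le A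
    · rw [(hbound (-J)).1, Units.val_neg, NegMemClass.coe_neg, ← neg_add', norm_neg]
      exact sq_norm_iUnit_add_one_le A
    · rw [(hbound (-J)).2, Units.val_neg, NegMemClass.coe_neg, neg_add_eq_sub, norm_sub_rev]
      exact sq_norm_iUnit_sub_one_le A
  exact ⟨hneg, eq_neg_of_mul_eq_one_of_sq_eq_neg_one hJJ hsq, hsq⟩

theorem stmt15 {X Y : Type*} [TopologicalSpace X] [CompactSpace X]
    [TopologicalSpace Y] [CompactSpace Y]
    (A : Subalgebra ℂ C(X, ℂ)) (B : Subalgebra ℂ C(Y, ℂ))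
    (hA : IsClosed (A : Set C(X, ℂ))) (hB : IsClosed (B : Set C(Y, ℂ)))
    (hAsep : ∀ x x' : X, x ≠ x' → ∃ f ∈ A, f x ≠ f x')
    (hBsep : ∀ y y' : Y, y ≠ y' → ∃ g ∈ B, g y ≠ g y')
    (T : (↥A)ˣ → (↥B)ˣ) (hsurj : Function.Surjective T)
    (h : ∀ f g : (↥A)ˣ, ‖(((T f * T g : (↥B)ˣ) : ↥B) : C(Y, ℂ)) - 1‖
        = ‖(((f * g : (↥A)ˣ) : ↥A) : C(X, ℂ)) - 1‖)
    (hT1 : T 1 = 1) :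
    T (-1) = -1 ∧ T (-(iUnit A)) = -(T (iUnit A)) ∧ (T (iUnit A)) ^ 2 = -1 :=
  stmt15_general A B T hsurj h hT1
end

section
/- Let A be a unital semisimple commutative Banach algebra, B a unital commutative Banach algebra, and S : A → B a surjective map such that r(SfSg − α) = r(fg − α) for all f, g ∈ A and some fixed nonzero complex number α, with B semisimple. Then S maps A⁻¹ onto B⁻¹. -/
/-! Since α ≠ 0, an element f is invertible iff f g = α for some g. In a semisimple algebra
r(x − α) = 0 forces x = α, so the hypothesis transports such a factorisation of α from A to B,
and surjectivity of S lets one transport it back. -/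

section Semisimple

variable {𝕜 R : Type*} [NormedField 𝕜] [CommRing R] [Algebra 𝕜 R]

theorem eq_algebraMap_of_spectralRadius_sub_eq_zero
    (hR : ∀ x : R, spectralRadius 𝕜 x = 0 → x = 0) {x : R} {α : 𝕜}
    (h : spectralRadius 𝕜 (x - algebraMap 𝕜 R α) = 0) : x = algebraMap 𝕜 R α :=
  sub_eq_zero.mp (hR _ h)

theorem isUnit_of_spectralRadius_mul_sub_algebraMap_eq_zero
    (hR : ∀ x : R, spectralRadius 𝕜 x = 0 → x = 0) {x y : R} {α : 𝕜} (hα : α ≠ 0)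
    (h : spectralRadius 𝕜 (x * y - algebraMap 𝕜 R α) = 0) : IsUnit x :=
  isUnit_of_dvd_unit ⟨y, (eq_algebraMap_of_spectralRadius_sub_eq_zero hR h).symm⟩
    ((IsUnit.mk0 α hα).map (algebraMap 𝕜 R))

end Semisimple

theorem exists_spectralRadius_mul_sub_algebraMap_eq_zero_of_dvd {𝕜 R : Type*} [NormedField 𝕜] [Ring R]
    [Algebra 𝕜 R] {x : R} {α : 𝕜} (hx : x ∣ algebraMap 𝕜 R α) :
    ∃ y, spectralRadius 𝕜 (x * y - algebraMap 𝕜 R α) = 0 := by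
  obtain ⟨y, hy⟩ := hx
  exact ⟨y, by rw [← hy, sub_self, spectrum.spectralRadius_zero]⟩

theorem stmt18_general {A B : Type*} [NormedCommRing A] [NormedAlgebra ℂ A]
    [NormedCommRing B] [NormedAlgebra ℂ B]
    (hA : ∀ a : A, spectralRadius ℂ a = 0 → a = 0)
    (hB : ∀ b : B, spectralRadius ℂ b = 0 → b = 0)
    (S : A → B) (hsurj : Function.Surjective S)
    (α : ℂ) (hα : α ≠ 0)
    (h : ∀ f g : A, spectralRadius ℂ (S f * S g - algebraMap ℂ B α)
        = spectralRadius ℂ (f * g - algebraMap ℂ A α)) :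
    S '' {a : A | IsUnit a} = {b : B | IsUnit b} := by
  ext b
  constructor
  · rintro ⟨f, hf, rfl⟩
    obtain ⟨g, hfg⟩ := exists_spectralRadius_mul_sub_algebraMap_eq_zero_of_dvd
      (hf.dvd : f ∣ algebraMap ℂ A α)
    exact isUnit_of_spectralRadius_mul_sub_algebraMap_eq_zero hB hα (y := S g) (by rwa [h])
  · intro hb
    obtain ⟨f, rfl⟩ := hsurj b
    obtain ⟨c, hfc⟩ := exists_spectralRadius_mul_sub_algebraMap_eq_zero_of_dvd
      (hb.dvd : S f ∣ algebraMap ℂ B α)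
    obtain ⟨g, rfl⟩ := hsurj c
    exact ⟨f, isUnit_of_spectralRadius_mul_sub_algebraMap_eq_zero hA hα (by rwa [← h]), rfl⟩

theorem stmt18 {A B : Type*} [NormedCommRing A] [NormedAlgebra ℂ A] [CompleteSpace A]
    [NormedCommRing B] [NormedAlgebra ℂ B] [CompleteSpace B]
    (hA : ∀ a : A, spectralRadius ℂ a = 0 → a = 0)
    (hB : ∀ b : B, spectralRadius ℂ b = 0 → b = 0)
    (S : A → B) (hsurj : Function.Surjective S)
    (α : ℂ) (hα : α ≠ 0)
    (h : ∀ f g : A, spectralRadius ℂ (S f * S g - algebraMap ℂ B α)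
        = spectralRadius ℂ (f * g - algebraMap ℂ A α)) :
    S '' {a : A | IsUnit a} = {b : B | IsUnit b} :=
  stmt18_general hA hB S hsurj α hα h
end
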